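/- Let μ and ν be q-tame Borel measures on ℝ² vanishing on {(x,y) : y ≤ x}, each concentrated on a countable set (there exist countable sets S, S' ⊆ ℝ² with μ(ℝ² ∖ S) = 0 and ν(ℝ² ∖ S') = 0), and each with finite second persistence moment: ∫ (x₂ − x₁)² dμ(x₁,x₂) < ∞ and ∫ (y₂ − y₁)² dν(y₁,y₂) < ∞. Let γ be any Borel measure on ℝ² × ℝ² concentrated on {((x₁,x₂),(y₁,y₂)) : x₁ ≤ x₂ and y₁ ≤ y₂} such that the pushforward of γ under the first projection agrees with μ on all Borel subsets of {(x,y) : x < y}, and the pushforward under the second projection agrees with ν on all Borel subsets of {(x,y) : x < y} (γ is a coupling of μ and ν). Then ∫_ℝ ∫_0^∞ |λ_μ(a,t) − λ_ν(a,t)| da dt ≤ (1/2) ∫ d_rk(x,y) dγ(x,y). In particular ‖λ_μ − λ_ν‖_{L¹} ≤ (1/2) W₁^{rk}(μ,ν), where W₁^{rk} is the infimum of ∫ d_rk dγ over all such couplings γ. -/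

import Mathlib

open MeasureTheory Set Filter
open scoped ENNReal

/-- The open quadrant `Q_{t,h} = (-∞, t-h) × (t+h, ∞)`. -/
def quadrant (t h : ℝ) : Set (ℝ × ℝ) := Set.Iio (t - h) ×ˢ Set.Ioi (t + h)

/-- A Borel measure on `ℝ²` is q-tame if every open quadrant has finite measure. -/
def QTame (μ : Measure (ℝ × ℝ)) : Prop := ∀ t h : ℝ, 0 ≤ h → μ (quadrant t h) < ⊤

/-- The continuous persistence landscape `λ_μ(a,t) = sup {h > 0 : μ(Q_{t,h}) ≥ a}`,
with the convention `sup ∅ = 0` (which is the convention of `Real.sSup`). -/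
noncomputable def landscape (μ : Measure (ℝ × ℝ)) (a t : ℝ) : ℝ :=
  sSup {h : ℝ | 0 < h ∧ a ≤ (μ (quadrant t h)).toReal}
/-- The rank metric `d_rk` on points of the half-plane. -/
noncomputable def drk (x y : ℝ × ℝ) : ℝ :=
  (1 / 2) * (x.2 - x.1) ^ 2 + (1 / 2) * (y.2 - y.1) ^ 2
    - (max (min x.2 y.2 - max x.1 y.1) 0) ^ 2

/-!
For fixed `t`, `a ↦ λ_μ(a,t)` is the generalized inverse of the nonincreasing function
`h ↦ μ(Q_{t,h})`: both describe the region `{(h,a) : 0 < a ≤ μ(Q_{t,h})}`. Measuring the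
symmetric difference of the regions of `μ` and `ν` slice by slice in either direction gives
`∫ |λ_μ(a,t) - λ_ν(a,t)| da ≤ ∫ |μ(Q_{t,h}) - ν(Q_{t,h})| dh`.

Through the coupling, `|μ(Q_{t,h}) - ν(Q_{t,h})| ≤ γ{(x,y) : exactly one of x, y lies in Q_{t,h}}`.
By Tonelli, integrating this over `(t,h)` gives the `γ`-integral of the area of the symmetric
difference of the tents `{(t,h) : h > 0, x ∈ Q_{t,h}}` and `{(t,h) : h > 0, y ∈ Q_{t,h}}`.
A tent over `x` is a right triangle of area `(x₂ - x₁)²/4`, and two tents meet in a tent,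
so this area is at most `d_rk(x,y)/2`.
-/

open scoped symmDiff Topology

lemma Set.Ioc_symmDiff_Ioc_subset_uIoc {α : Type*} [LinearOrder α] (a b c : α) :
    Ioc a b ∆ Ioc a c ⊆ uIoc b c := by
  rintro x (⟨⟨hax, hxb⟩, hxc⟩ | ⟨⟨hax, hxc⟩, hxb⟩)
  · exact ⟨min_lt_of_right_lt (not_le.1 fun h => hxc ⟨hax, h⟩), le_max_of_le_left hxb⟩
  · exact ⟨min_lt_of_left_lt (not_le.1 fun h => hxb ⟨hax, h⟩), le_max_of_le_right hxc⟩

lemma Set.uIoc_subset_Ioc_symmDiff_Ioc {α : Type*} [LinearOrder α] {a b c : α} (hb : a ≤ b)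
    (hc : a ≤ c) : uIoc b c ⊆ Ioc a b ∆ Ioc a c := by
  rintro x ⟨hx, hx'⟩
  rcases le_total b c with hbc | hcb
  · rw [min_eq_left hbc] at hx; rw [max_eq_right hbc] at hx'
    exact Or.inr ⟨⟨hb.trans_lt hx, hx'⟩, fun h => (h.2.trans_lt hx).false⟩
  · rw [min_eq_right hcb] at hx; rw [max_eq_left hcb] at hx'
    exact Or.inl ⟨⟨hc.trans_lt hx, hx'⟩, fun h => (h.2.trans_lt hx).false⟩

lemma MeasureTheory.sigmaFinite_restrict_iUnion {α ι : Type*} [MeasurableSpace α] [Countable ι]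
    (μ : Measure α) {s : ι → Set α} (hsm : ∀ i, MeasurableSet (s i)) (hs : ∀ i, μ (s i) ≠ ∞) :
    SigmaFinite (μ.restrict (⋃ i, s i)) := by
  have hU : MeasurableSet (⋃ i, s i) := MeasurableSet.iUnion hsm
  refine Measure.sigmaFinite_of_countable ((countable_range s).insert (⋃ i, s i)ᶜ) ?_ ?_
  · rintro _ (rfl | ⟨i, rfl⟩)
    · rw [Measure.restrict_apply hU.compl, compl_inter_self, measure_empty]
      exact ENNReal.zero_lt_top
    · exact (Measure.restrict_apply_le _ _).trans_lt (hs i).lt_top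
  · rw [sUnion_insert, sUnion_range, compl_union_self]

lemma MeasureTheory.ofReal_abs_toReal_sub_le_measure_symmDiff {α : Type*} [MeasurableSpace α]
    {μ : Measure α} {s t : Set α} (hs : NullMeasurableSet s μ) (ht : NullMeasurableSet t μ)
    (hs' : μ s ≠ ∞) (ht' : μ t ≠ ∞) :
    ENNReal.ofReal |(μ s).toReal - (μ t).toReal| ≤ μ (s ∆ t) :=
  (ENNReal.ofReal_le_ofReal (abs_measureReal_sub_le_measureReal_symmDiff' hs ht hs' ht')).trans
    ENNReal.ofReal_toReal_le

noncomputable def superlevelSup (f : ℝ → ℝ) (a : ℝ) : ℝ := sSup {h | 0 < h ∧ a ≤ f h}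

def posHypograph (f : ℝ → ℝ) : Set (ℝ × ℝ) := {p | 0 < p.1 ∧ 0 < p.2 ∧ p.2 ≤ f p.1}

section superlevelSup

variable {f g : ℝ → ℝ}

lemma superlevelSup_nonneg (f : ℝ → ℝ) (a : ℝ) : 0 ≤ superlevelSup f a :=
  Real.sSup_nonneg fun _ hh => hh.1.le

lemma le_of_lt_superlevelSup (hf : AntitoneOn f (Ioi 0)) {a h : ℝ} (hh : 0 < h)
    (hlt : h < superlevelSup f a) : a ≤ f h := by
  by_contra! hfa
  refine hlt.not_ge (Real.sSup_le (fun h' hh' => ?_) hh.le)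
  by_contra! hhh'
  exact (hf hh hh'.1 hhh'.le).not_gt (hfa.trans_le hh'.2)

lemma bddAbove_superlevel (hf : Tendsto f atTop (𝓝 0)) {a : ℝ} (ha : 0 < a) :
    BddAbove {h | 0 < h ∧ a ≤ f h} := by
  obtain ⟨H, hH⟩ := eventually_atTop.1 (hf.eventually (gt_mem_nhds ha))
  exact ⟨H, fun h hh => le_of_not_gt fun hHh => (hH h hHh.le).not_ge hh.2⟩

lemma measurableSet_posHypograph (hf : Measurable f) : MeasurableSet (posHypograph f) := by
  simp only [posHypograph, ofPred_and]
  exact (measurableSet_lt measurable_const measurable_fst).inter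
    ((measurableSet_lt measurable_const measurable_snd).inter
      (measurableSet_le measurable_snd (hf.comp measurable_fst)))

lemma posHypograph_slice_ae_eq (hf : AntitoneOn f (Ioi 0)) (hf0 : Tendsto f atTop (𝓝 0))
    {a : ℝ} (ha : 0 < a) :
    (fun h => (h, a)) ⁻¹' posHypograph f =ᵐ[volume] Ioc 0 (superlevelSup f a) := by
  have hsub : (fun h => (h, a)) ⁻¹' posHypograph f ⊆ Ioc 0 (superlevelSup f a) :=
    fun h hh => ⟨hh.1, le_csSup (bddAbove_superlevel hf0 ha) ⟨hh.1, hh.2.2⟩⟩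
  have hsup : Ioo 0 (superlevelSup f a) ⊆ (fun h => (h, a)) ⁻¹' posHypograph f :=
    fun h hh => ⟨hh.1, ha, le_of_lt_superlevelSup hf hh.1 hh.2⟩
  exact hsub.eventuallyLE.antisymm (Ioo_ae_eq_Ioc.symm.le.trans hsup.eventuallyLE)

lemma posHypograph_slice_of_pos {h : ℝ} (hh : 0 < h) :
    Prod.mk h ⁻¹' posHypograph f = Ioc 0 (f h) := by
  ext a
  simp [posHypograph, hh]

theorem lintegral_abs_superlevelSup_sub_le (hfm : Measurable f) (hgm : Measurable g)
    (hf : AntitoneOn f (Ioi 0)) (hg : AntitoneOn g (Ioi 0))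
    (hf0 : Tendsto f atTop (𝓝 0)) (hg0 : Tendsto g atTop (𝓝 0)) :
    ∫⁻ a in Ioi 0, ENNReal.ofReal |superlevelSup f a - superlevelSup g a| ≤
      ∫⁻ h in Ioi 0, ENNReal.ofReal |f h - g h| := by
  set R := posHypograph f ∆ posHypograph g
  have hR : MeasurableSet R :=
    (measurableSet_posHypograph hfm).symmDiff (measurableSet_posHypograph hgm)
  calc ∫⁻ a in Ioi 0, ENNReal.ofReal |superlevelSup f a - superlevelSup g a|
      ≤ ∫⁻ a in Ioi 0, volume ((fun h => (h, a)) ⁻¹' R) := by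
        refine setLIntegral_mono' measurableSet_Ioi fun a (ha : 0 < a) => ?_
        rw [preimage_symmDiff, measure_congr ((posHypograph_slice_ae_eq hf hf0 ha).symmDiff
          (posHypograph_slice_ae_eq hg hg0 ha)), abs_sub_comm, ← Real.volume_uIoc]
        exact measure_mono (uIoc_subset_Ioc_symmDiff_Ioc (superlevelSup_nonneg f a)
          (superlevelSup_nonneg g a))
    _ ≤ ∫⁻ a, volume ((fun h => (h, a)) ⁻¹' R) := setLIntegral_le_lintegral _ _
    _ = ∫⁻ h, volume (Prod.mk h ⁻¹' R) := by
        rw [← Measure.prod_apply_symm hR, Measure.prod_apply hR]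
    _ ≤ ∫⁻ h in Ioi 0, ENNReal.ofReal |f h - g h| := by
        rw [← lintegral_indicator measurableSet_Ioi]
        refine lintegral_mono fun h => ?_
        by_cases hh : 0 < h
        · rw [indicator_of_mem (mem_Ioi.2 hh), preimage_symmDiff, posHypograph_slice_of_pos hh,
            posHypograph_slice_of_pos hh, abs_sub_comm, ← Real.volume_uIoc]
          exact measure_mono (Ioc_symmDiff_Ioc_subset_uIoc _ _ _)
        · rw [indicator_of_notMem (by simpa using hh), nonpos_iff_eq_zero]
          refine measure_mono_null (fun a ha => ?_) measure_empty
          rcases ha with ⟨⟨hpos, -⟩, -⟩ | ⟨⟨hpos, -⟩, -⟩ <;> exact hh hpos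

end superlevelSup

lemma measurableSet_quadrant (t h : ℝ) : MeasurableSet (quadrant t h) :=
  measurableSet_Iio.prod measurableSet_Ioi

lemma quadrant_anti (t : ℝ) : Antitone (quadrant t) := fun h h' hh x hx => by
  obtain ⟨h1, h2⟩ : x.1 < t - h' ∧ t + h' < x.2 := hx
  exact ⟨show x.1 < t - h by linarith, show t + h < x.2 by linarith⟩

lemma iInter_quadrant (t : ℝ) : ⋂ h, quadrant t h = ∅ :=
  eq_empty_of_forall_notMem fun x hx =>
    lt_irrefl x.1 (by simpa using (mem_iInter.1 hx (t - x.1)).1)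

lemma quadrant_subset_setOf_lt {t h : ℝ} (hh : 0 ≤ h) : quadrant t h ⊆ {p | p.1 < p.2} :=
  fun x hx => by
    obtain ⟨h1, h2⟩ : x.1 < t - h ∧ t + h < x.2 := hx
    exact show x.1 < x.2 by linarith

lemma setOf_lt_subset_iUnion_quadrant : {p : ℝ × ℝ | p.1 < p.2} ⊆ ⋃ r : ℚ, quadrant r 0 :=
  fun x hx => by
    obtain ⟨r, h1, h2⟩ := exists_rat_btwn (show x.1 < x.2 from hx)
    exact mem_iUnion.2 ⟨r, by simpa [quadrant] using ⟨h1, h2⟩⟩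

lemma sigmaFinite_restrict_preimage_setOf_lt {α : Type*} [MeasurableSpace α] (γ : Measure α)
    {f : α → ℝ × ℝ} (hf : Measurable f) (hfin : ∀ r : ℚ, γ (f ⁻¹' quadrant r 0) ≠ ∞) :
    SigmaFinite (γ.restrict (f ⁻¹' {p | p.1 < p.2})) :=
  have := sigmaFinite_restrict_iUnion γ (fun r : ℚ => (measurableSet_quadrant r 0).preimage hf) hfin
  Measure.sigmaFinite_of_le _ <| Measure.restrict_mono
    (by simpa only [preimage_iUnion] using preimage_mono setOf_lt_subset_iUnion_quadrant) le_rfl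

lemma antitone_measure_quadrant (μ : Measure (ℝ × ℝ)) (t : ℝ) :
    Antitone fun h => μ (quadrant t h) :=
  fun _ _ hle => measure_mono (quadrant_anti t hle)

/-- The open region under the tent `t ↦ max 0 (min (t - x.1) (x.2 - t))` of `x`. -/
def tent (x : ℝ × ℝ) : Set (ℝ × ℝ) := {p | 0 < p.2 ∧ x ∈ quadrant p.1 p.2}

lemma measurableSet_mem_tent {α : Type*} [MeasurableSpace α] {p x : α → ℝ × ℝ}
    (hp : Measurable p) (hx : Measurable x) : MeasurableSet {z | p z ∈ tent (x z)} := by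
  simp only [tent, quadrant, mem_prod, mem_Iio, mem_Ioi, ofPred_and]
  refine (measurableSet_lt ?_ ?_).inter ((measurableSet_lt ?_ ?_).inter
    (measurableSet_lt ?_ ?_)) <;> fun_prop

lemma measurableSet_tent (x : ℝ × ℝ) : MeasurableSet (tent x) :=
  measurableSet_mem_tent (x := fun _ => x) measurable_id measurable_const

lemma tent_inter_tent (x y : ℝ × ℝ) : tent x ∩ tent y = tent (max x.1 y.1, min x.2 y.2) := by
  ext p
  simp only [tent, quadrant, mem_inter_iff, mem_ofPred_eq, mem_prod, mem_Iio, mem_Ioi,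
    max_lt_iff, lt_min_iff]
  tauto

lemma lintegral_Ioi_ofReal_sub_two_mul (w : ℝ) :
    ∫⁻ h in Ioi (0 : ℝ), ENNReal.ofReal (w - 2 * h) = ENNReal.ofReal (max w 0 ^ 2 / 4) := by
  set c := max w 0
  have hc : 0 ≤ c / 2 := by positivity
  have hwc : ∀ h ∈ Ioi (0 : ℝ), ENNReal.ofReal (w - 2 * h) = ENNReal.ofReal (c - 2 * h) := by
    intro h (hh : 0 < h)
    rcases le_total w 0 with hw | hw
    · rw [show c = 0 from max_eq_right hw, ENNReal.ofReal_of_nonpos (by linarith),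
        ENNReal.ofReal_of_nonpos (by linarith)]
    · rw [show c = w from max_eq_left hw]
  have hzero : ∀ h ∈ Ioi (c / 2), ENNReal.ofReal (c - 2 * h) = 0 := fun h (hh : c / 2 < h) =>
    ENNReal.ofReal_of_nonpos (by linarith)
  rw [setLIntegral_congr_fun measurableSet_Ioi hwc, ← Ioc_union_Ioi_eq_Ioi hc,
    lintegral_union measurableSet_Ioi Ioc_disjoint_Ioi_same,
    setLIntegral_congr_fun measurableSet_Ioi hzero, lintegral_zero, add_zero,
    ← ofReal_integral_eq_lintegral_ofReal, ← intervalIntegral.integral_of_le hc]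
  · rw [intervalIntegral.integral_sub intervalIntegrable_const
      (intervalIntegral.intervalIntegrable_id.const_mul 2), intervalIntegral.integral_const,
      intervalIntegral.integral_const_mul, integral_id]
    congr 1
    simp only [smul_eq_mul]
    ring
  · exact (by fun_prop : Continuous fun h : ℝ => c - 2 * h).integrableOn_Ioc
  · filter_upwards [ae_restrict_mem measurableSet_Ioc] with h hh
    simp only [Pi.zero_apply]; linarith [hh.2]

lemma volume_tent (x : ℝ × ℝ) :
    volume (tent x) = ENNReal.ofReal (max (x.2 - x.1) 0 ^ 2 / 4) := by
  have hslice (h : ℝ) : volume ((fun t => (t, h)) ⁻¹' tent x) =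
      (Ioi 0).indicator (fun h => ENNReal.ofReal (x.2 - x.1 - 2 * h)) h := by
    by_cases hh : 0 < h
    · have : (fun t => (t, h)) ⁻¹' tent x = Ioo (x.1 + h) (x.2 - h) := by
        ext t
        simp only [tent, quadrant, mem_preimage, mem_ofPred_eq, mem_prod, mem_Iio, mem_Ioi,
          mem_Ioo, hh, true_and]
        constructor <;> rintro ⟨h1, h2⟩ <;> constructor <;> linarith
      rw [this, Real.volume_Ioo, indicator_of_mem (mem_Ioi.2 hh)]
      ring_nf
    · have : (fun t => (t, h)) ⁻¹' tent x = ∅ := eq_empty_of_forall_notMem fun _ ht => hh ht.1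
      rw [this, measure_empty, indicator_of_notMem (by simpa using hh)]
  rw [Measure.volume_eq_prod, Measure.prod_apply_symm (measurableSet_tent x),
    lintegral_congr hslice, lintegral_indicator measurableSet_Ioi,
    lintegral_Ioi_ofReal_sub_two_mul]

lemma volume_tent_diff (x y : ℝ × ℝ) :
    volume (tent x \ tent y) = ENNReal.ofReal (max (x.2 - x.1) 0 ^ 2 / 4 -
      max (min x.2 y.2 - max x.1 y.1) 0 ^ 2 / 4) := by
  rw [← sdiff_self_inter, measure_sdiff inter_subset_left
    ((measurableSet_tent x).inter (measurableSet_tent y)).nullMeasurableSet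
    (by rw [tent_inter_tent, volume_tent]; exact ENNReal.ofReal_ne_top),
    tent_inter_tent, volume_tent, volume_tent, ← ENNReal.ofReal_sub _ (by positivity)]

lemma max_zero_sq_le (d : ℝ) : max d 0 ^ 2 ≤ d ^ 2 := by
  rcases le_total d 0 with hd | hd
  · rw [max_eq_right hd, sq, zero_mul]; exact sq_nonneg d
  · rw [max_eq_left hd]

lemma volume_tent_symmDiff_le (x y : ℝ × ℝ) :
    volume (tent x ∆ tent y) ≤ 2⁻¹ * ENNReal.ofReal (drk x y) := by
  set c := max (min x.2 y.2 - max x.1 y.1) 0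
  have hcx : c ≤ max (x.2 - x.1) 0 :=
    max_le_max_right 0 (sub_le_sub (min_le_left _ _) (le_max_left _ _))
  have hcy : c ≤ max (y.2 - y.1) 0 :=
    max_le_max_right 0 (sub_le_sub (min_le_right _ _) (le_max_right _ _))
  have hc : 0 ≤ c := le_max_right _ _
  rw [measure_symmDiff_eq (measurableSet_tent x).nullMeasurableSet
    (measurableSet_tent y).nullMeasurableSet, volume_tent_diff x y, volume_tent_diff y x,
    min_comm y.2, max_comm y.1, ← ENNReal.ofReal_add (by nlinarith) (by nlinarith),
    ← ENNReal.ofReal_ofNat 2, ← ENNReal.ofReal_inv_of_pos two_pos,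
    ← ENNReal.ofReal_mul (by norm_num)]
  refine ENNReal.ofReal_le_ofReal ?_
  have := max_zero_sq_le (x.2 - x.1)
  have := max_zero_sq_le (y.2 - y.1)
  simp only [drk]
  linarith

lemma lintegral_measure_preimage_quadrant_symmDiff {α : Type*} [MeasurableSpace α]
    (γ : Measure α) [SFinite γ] {f g : α → ℝ × ℝ} (hf : Measurable f) (hg : Measurable g) :
    ∫⁻ t, ∫⁻ h in Ioi 0, γ ((f ⁻¹' quadrant t h) ∆ (g ⁻¹' quadrant t h)) =
      ∫⁻ q, volume (tent (f q) ∆ tent (g q)) ∂γ := by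
  set W := {z : (ℝ × ℝ) × α | z.1 ∈ tent (f z.2) ∆ tent (g z.2)}
  have hW : MeasurableSet W :=
    (measurableSet_mem_tent measurable_fst (hf.comp measurable_snd)).symmDiff
      (measurableSet_mem_tent measurable_fst (hg.comp measurable_snd))
  have hslice (t h : ℝ) : γ (Prod.mk (t, h) ⁻¹' W) =
      (Ioi 0).indicator (fun h => γ ((f ⁻¹' quadrant t h) ∆ (g ⁻¹' quadrant t h))) h := by
    by_cases hh : 0 < h
    · rw [indicator_of_mem (mem_Ioi.2 hh)]
      congr 1
      ext q
      simp [W, tent, mem_symmDiff, hh]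
    · rw [indicator_of_notMem (by simpa using hh)]
      refine measure_mono_null (fun q hq => ?_) measure_empty
      rcases hq with ⟨⟨hpos, -⟩, -⟩ | ⟨⟨hpos, -⟩, -⟩ <;> exact hh hpos
  calc ∫⁻ t, ∫⁻ h in Ioi 0, γ ((f ⁻¹' quadrant t h) ∆ (g ⁻¹' quadrant t h))
      = ∫⁻ p : ℝ × ℝ, γ (Prod.mk p ⁻¹' W) := by
        simp_rw [← lintegral_indicator measurableSet_Ioi, ← hslice, Measure.volume_eq_prod]
        exact (lintegral_prod _ (measurable_measure_prodMk_left hW).aemeasurable).symm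
    _ = (volume.prod γ) W := (Measure.prod_apply hW).symm
    _ = ∫⁻ q, volume (tent (f q) ∆ tent (g q)) ∂γ := Measure.prod_apply_symm hW

section QTame

variable {μ ν : Measure (ℝ × ℝ)}

lemma QTame.tendsto_toReal_measure_quadrant (hμ : QTame μ) (t : ℝ) :
    Tendsto (fun h => (μ (quadrant t h)).toReal) atTop (𝓝 0) := by
  have h := tendsto_measure_iInter_atTop (μ := μ)
    (fun h => (measurableSet_quadrant t h).nullMeasurableSet) (quadrant_anti t)
    ⟨0, (hμ t 0 le_rfl).ne⟩
  rw [iInter_quadrant, measure_empty] at h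
  simpa [Function.comp_def] using (ENNReal.tendsto_toReal ENNReal.zero_ne_top).comp h

lemma QTame.antitoneOn_toReal_measure_quadrant (hμ : QTame μ) (t : ℝ) :
    AntitoneOn (fun h => (μ (quadrant t h)).toReal) (Ioi 0) := fun h hh _ _ hle =>
  ENNReal.toReal_mono (hμ t h (le_of_lt hh)).ne (antitone_measure_quadrant μ t hle)

lemma lintegral_abs_landscape_sub_le (hμ : QTame μ) (hν : QTame ν) (t : ℝ) :
    ∫⁻ a in Ioi 0, ENNReal.ofReal |landscape μ a t - landscape ν a t| ≤
      ∫⁻ h in Ioi 0, ENNReal.ofReal |(μ (quadrant t h)).toReal - (ν (quadrant t h)).toReal| :=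
  lintegral_abs_superlevelSup_sub_le (antitone_measure_quadrant μ t).measurable.ennreal_toReal
    (antitone_measure_quadrant ν t).measurable.ennreal_toReal
    (hμ.antitoneOn_toReal_measure_quadrant t) (hν.antitoneOn_toReal_measure_quadrant t)
    (hμ.tendsto_toReal_measure_quadrant t) (hν.tendsto_toReal_measure_quadrant t)

end QTame

theorem landscape_L1_stability_general (μ ν : Measure (ℝ × ℝ)) (hμ : QTame μ) (hν : QTame ν)
    (γ : Measure ((ℝ × ℝ) × (ℝ × ℝ)))
    (hγfst : ∀ B : Set (ℝ × ℝ), MeasurableSet B → B ⊆ {p : ℝ × ℝ | p.1 < p.2} →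
      γ (Prod.fst ⁻¹' B) = μ B)
    (hγsnd : ∀ B : Set (ℝ × ℝ), MeasurableSet B → B ⊆ {p : ℝ × ℝ | p.1 < p.2} →
      γ (Prod.snd ⁻¹' B) = ν B) :
    ∫⁻ t : ℝ, ∫⁻ a in Set.Ioi (0 : ℝ),
        ENNReal.ofReal |landscape μ a t - landscape ν a t| ≤
      (1 / 2 : ℝ≥0∞) * ∫⁻ q, ENNReal.ofReal (drk q.1 q.2) ∂γ := by
  set S := {p : ℝ × ℝ | p.1 < p.2}
  -- Tonelli needs an s-finite measure. On pairs with a point in `S`, `γ` is σ-finite by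
  -- q-tameness, and these pairs still carry the marginals on quadrants.
  set γ' := γ.restrict (Prod.fst ⁻¹' S ∪ Prod.snd ⁻¹' S)
  have hfst {t h : ℝ} (hh : 0 ≤ h) : γ' (Prod.fst ⁻¹' quadrant t h) = μ (quadrant t h) := by
    rw [Measure.restrict_apply ((measurableSet_quadrant t h).preimage measurable_fst),
      inter_eq_left.2 ((preimage_mono (quadrant_subset_setOf_lt hh)).trans subset_union_left)]
    exact hγfst _ (measurableSet_quadrant t h) (quadrant_subset_setOf_lt hh)
  have hsnd {t h : ℝ} (hh : 0 ≤ h) : γ' (Prod.snd ⁻¹' quadrant t h) = ν (quadrant t h) := by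
    rw [Measure.restrict_apply ((measurableSet_quadrant t h).preimage measurable_snd),
      inter_eq_left.2 ((preimage_mono (quadrant_subset_setOf_lt hh)).trans subset_union_right)]
    exact hγsnd _ (measurableSet_quadrant t h) (quadrant_subset_setOf_lt hh)
  have : SigmaFinite γ' := by
    have := sigmaFinite_restrict_preimage_setOf_lt γ measurable_fst fun r => by
      rw [hγfst _ (measurableSet_quadrant r 0) (quadrant_subset_setOf_lt le_rfl)]
      exact (hμ r 0 le_rfl).ne
    have := sigmaFinite_restrict_preimage_setOf_lt γ measurable_snd fun r => by
      rw [hγsnd _ (measurableSet_quadrant r 0) (quadrant_subset_setOf_lt le_rfl)]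
      exact (hν r 0 le_rfl).ne
    infer_instance
  calc ∫⁻ t, ∫⁻ a in Ioi 0, ENNReal.ofReal |landscape μ a t - landscape ν a t|
      ≤ ∫⁻ t, ∫⁻ h in Ioi 0,
          ENNReal.ofReal |(μ (quadrant t h)).toReal - (ν (quadrant t h)).toReal| :=
        lintegral_mono fun t => lintegral_abs_landscape_sub_le hμ hν t
    _ ≤ ∫⁻ t, ∫⁻ h in Ioi 0, γ' ((Prod.fst ⁻¹' quadrant t h) ∆ (Prod.snd ⁻¹' quadrant t h)) :=
        lintegral_mono fun t => setLIntegral_mono' measurableSet_Ioi fun h (hh : 0 < h) => by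
          rw [← hfst hh.le, ← hsnd hh.le]
          exact ofReal_abs_toReal_sub_le_measure_symmDiff
            ((measurableSet_quadrant t h).preimage measurable_fst).nullMeasurableSet
            ((measurableSet_quadrant t h).preimage measurable_snd).nullMeasurableSet
            (by rw [hfst hh.le]; exact (hμ t h hh.le).ne)
            (by rw [hsnd hh.le]; exact (hν t h hh.le).ne)
    _ = ∫⁻ q, volume (tent q.1 ∆ tent q.2) ∂γ' :=
        lintegral_measure_preimage_quadrant_symmDiff γ' measurable_fst measurable_snd
    _ ≤ ∫⁻ q, 2⁻¹ * ENNReal.ofReal (drk q.1 q.2) ∂γ' :=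
        lintegral_mono fun q => volume_tent_symmDiff_le q.1 q.2
    _ ≤ ∫⁻ q, 2⁻¹ * ENNReal.ofReal (drk q.1 q.2) ∂γ :=
        lintegral_mono' Measure.restrict_le_self le_rfl
    _ = (1 / 2 : ℝ≥0∞) * ∫⁻ q, ENNReal.ofReal (drk q.1 q.2) ∂γ := by
        rw [lintegral_const_mul' _ _ (by simp), one_div]

/-- $L^1$-stability of continuous persistence landscapes with respect to the
1-Wasserstein distance built from the rank metric. -/
theorem landscape_L1_stability (μ ν : Measure (ℝ × ℝ)) (hμ : QTame μ) (hν : QTame ν)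
    (hμ0 : μ {p : ℝ × ℝ | p.2 ≤ p.1} = 0) (hν0 : ν {p : ℝ × ℝ | p.2 ≤ p.1} = 0)
    (hμc : ∃ S : Set (ℝ × ℝ), S.Countable ∧ μ Sᶜ = 0)
    (hνc : ∃ S' : Set (ℝ × ℝ), S'.Countable ∧ ν S'ᶜ = 0)
    (hμm : ∫⁻ p, ENNReal.ofReal ((p.2 - p.1) ^ 2) ∂μ < ⊤)
    (hνm : ∫⁻ p, ENNReal.ofReal ((p.2 - p.1) ^ 2) ∂ν < ⊤)
    (γ : Measure ((ℝ × ℝ) × (ℝ × ℝ)))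
    (hγsupp : γ {q : (ℝ × ℝ) × (ℝ × ℝ) | ¬ (q.1.1 ≤ q.1.2 ∧ q.2.1 ≤ q.2.2)} = 0)
    (hγfst : ∀ B : Set (ℝ × ℝ), MeasurableSet B → B ⊆ {p : ℝ × ℝ | p.1 < p.2} →
      γ (Prod.fst ⁻¹' B) = μ B)
    (hγsnd : ∀ B : Set (ℝ × ℝ), MeasurableSet B → B ⊆ {p : ℝ × ℝ | p.1 < p.2} →
      γ (Prod.snd ⁻¹' B) = ν B) :
    ∫⁻ t : ℝ, ∫⁻ a in Set.Ioi (0 : ℝ),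
        ENNReal.ofReal |landscape μ a t - landscape ν a t| ≤
      (1 / 2 : ℝ≥0∞) * ∫⁻ q, ENNReal.ofReal (drk q.1 q.2) ∂γ :=
  landscape_L1_stability_general μ ν hμ hν γ hγfst hγsnd
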